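/- For every integer n ≥ 3 and every real μ ≥ 1, there exists a unique t ∈ (0,1) with scal_C(n,t)/(2n²−1) = μ. (Hence, since every eigenvalue of the Laplacian of the base Sp(n)/U(n) is a real number ≥ 1, each such eigenvalue is attained by scal(k_t)/(m−1) at exactly one instant t ∈ (0,1), giving infinitely many degeneracy instants of the canonical variation k_t on Sp(n)/Tⁿ accumulating at 0.) -/
import Mathlib


/-- Scalar curvature of the canonical variation `k_t` of the normal homogeneous
metric on the full flag manifold `Sp(n)/Tⁿ`. -/
noncomputable def scalC (n : ℕ) (t : ℝ) : ℝ :=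
  (-2 * n ^ 3 * t ^ 4 + 24 * n ^ 3 * t ^ 2 + 5 * n ^ 3 + 48 * n ^ 2 * t ^ 2 + 9 * n ^ 2
    + 2 * n * t ^ 4 + 24 * n * t ^ 2 - 14 * n) / (24 * (n + 1) * t ^ 2)

/-- `scalC n` is strictly decreasing on positive reals. -/
lemma scalC_anti (n : ℕ) (hn : 3 ≤ n) {x y : ℝ} (hx : 0 < x) (hxy : x < y) :
    scalC n y < scalC n x := by
  have hN : (3 : ℝ) ≤ (n : ℝ) := by exact_mod_cast hn
  have hy : (0 : ℝ) < y := hx.trans hxy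
  unfold scalC
  rw [div_lt_div_iff₀ (by positivity) (by positivity)]
  have h1 : (0 : ℝ) < y ^ 2 - x ^ 2 := by nlinarith
  have hC : (0 : ℝ) < 5 * (n:ℝ)^3 + 9 * (n:ℝ)^2 - 14 * (n:ℝ) := by
    nlinarith [mul_pos (mul_pos (show (0:ℝ) < (n:ℝ) by linarith)
      (show (0:ℝ) < (n:ℝ) - 1 by linarith)) (show (0:ℝ) < 5 * (n:ℝ) + 14 by linarith)]
  have hA : (0 : ℝ) ≤ (2 * (n:ℝ)^3 - 2 * (n:ℝ)) * x^2 * y^2 := by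
    have h2 : (0:ℝ) ≤ 2 * (n:ℝ)^3 - 2 * (n:ℝ) := by nlinarith
    positivity
  have h2 : (0 : ℝ) < (5 * (n:ℝ)^3 + 9 * (n:ℝ)^2 - 14 * (n:ℝ))
      + (2 * (n:ℝ)^3 - 2 * (n:ℝ)) * x^2 * y^2 := by linarith
  have hd : (0 : ℝ) < 24 * ((n:ℝ) + 1) := by nlinarith
  nlinarith [mul_pos hd (mul_pos h1 h2)]

/-- Lower bound for `scalC` on `(0,1]`. -/
lemma scalC_lower (n : ℕ) (hn : 3 ≤ n) {t : ℝ} (ht : 0 < t) (ht1 : t ≤ 1) :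
    (3 * (n:ℝ)^3 + 9 * (n:ℝ)^2 - 12 * (n:ℝ)) / (24 * ((n:ℝ) + 1) * t ^ 2) ≤ scalC n t := by
  have hN : (3 : ℝ) ≤ (n : ℝ) := by exact_mod_cast hn
  unfold scalC
  rw [div_le_div_iff₀ (by positivity) (by positivity)]
  have ht2 : t ^ 2 ≤ 1 := by nlinarith
  have ht4 : t ^ 4 ≤ 1 := by nlinarith
  have hd : (0 : ℝ) < 24 * ((n:ℝ) + 1) * t ^ 2 := by positivity
  have h₁ : (0:ℝ) ≤ 2 * (n:ℝ) * ((n:ℝ)^2 - 1) * (1 - t^4)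
      + 24 * (n:ℝ) * ((n:ℝ) + 1)^2 * t^2 := by
    have e1 : (0:ℝ) ≤ 2 * (n:ℝ) * ((n:ℝ)^2 - 1) := by nlinarith
    have e2 : (0:ℝ) ≤ 1 - t^4 := by linarith
    have e3 : (0:ℝ) ≤ 24 * (n:ℝ) * ((n:ℝ) + 1)^2 * t^2 := by positivity
    nlinarith [mul_nonneg e1 e2]
  nlinarith [mul_nonneg hd.le h₁]

lemma scalC_one_lt (n : ℕ) (hn : 3 ≤ n) : scalC n 1 < 2 * (n:ℝ) ^ 2 - 1 := by
  have hN : (3 : ℝ) ≤ (n : ℝ) := by exact_mod_cast hn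
  unfold scalC
  rw [div_lt_iff₀ (by positivity)]
  nlinarith [mul_nonneg (mul_nonneg (show (0:ℝ) ≤ (n:ℝ) - 3 by linarith)
    (show (0:ℝ) ≤ (n:ℝ) by linarith)) (show (0:ℝ) ≤ (n:ℝ) by linarith), sq_nonneg ((n:ℝ) - 3)]

/-- For `n ≥ 3` and every real `μ ≥ 1`, there is a unique `t ∈ (0,1)` with
`scal_C(n,t)/(2n²-1) = μ`.  Since every eigenvalue of the Laplacian of the base
`Sp(n)/U(n)` is `≥ 1`, each such eigenvalue is attained by `scal(k_t)/(m-1)` at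
exactly one instant `t ∈ (0,1)`, giving infinitely many degeneracy instants
of `k_t` on `Sp(n)/Tⁿ` accumulating at `0`. -/
theorem scalC_exists_unique_degeneracy (n : ℕ) (hn : 3 ≤ n) (μ : ℝ) (hμ : 1 ≤ μ) :
    ∃! t : ℝ, t ∈ Set.Ioo (0 : ℝ) 1 ∧ scalC n t / (2 * n ^ 2 - 1) = μ := by
  have hN : (3 : ℝ) ≤ (n : ℝ) := by exact_mod_cast hn
  set N : ℝ := (n : ℝ) with hNdef
  have hc : (0 : ℝ) < 2 * N ^ 2 - 1 := by nlinarith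
  set L : ℝ := 3 * N ^ 3 + 9 * N ^ 2 - 12 * N with hLdef
  have hL : 0 < L := by nlinarith
  set K : ℝ := (2 * N ^ 2 - 1) * μ with hKdef
  have hK : 0 < K := by nlinarith
  set t₀ : ℝ := Real.sqrt (L / (24 * (N + 1) * K)) / 2 with ht₀def
  have hq : (0 : ℝ) < L / (24 * (N + 1) * K) := by positivity
  have ht₀pos : 0 < t₀ := by
    have := Real.sqrt_pos.mpr hq
    positivity
  have ht₀sq : t₀ ^ 2 = L / (24 * (N + 1) * K) / 4 := by
    rw [ht₀def, div_pow, Real.sq_sqrt hq.le]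
    norm_num
  have hqlt : L / (24 * (N + 1) * K) < 4 := by
    rw [div_lt_iff₀ (by positivity)]
    nlinarith
  have ht₀lt : t₀ < 1 := by
    have h1 : t₀ ^ 2 < 1 := by rw [ht₀sq]; linarith
    nlinarith
  -- value at t₀ is at least K
  have hval₀ : K ≤ scalC n t₀ := by
    have hlow := scalC_lower n hn ht₀pos ht₀lt.le
    rw [← hNdef] at hlow
    have heq : L / (24 * (N + 1) * t₀ ^ 2) = 4 * K := by
      rw [ht₀sq]
      have h24 : (24 * (N + 1) * K) ≠ 0 := by positivity
      field_simp
    rw [← hLdef, heq] at hlow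
    nlinarith
  -- value at 1 is less than K
  have hval₁ : scalC n 1 < K := by
    have := scalC_one_lt n hn
    rw [← hNdef] at this
    nlinarith
  -- continuity on [t₀, 1]
  have hcont : ContinuousOn (fun t : ℝ => scalC n t / (2 * N ^ 2 - 1)) (Set.Icc t₀ 1) := by
    apply ContinuousOn.div_const
    unfold scalC
    apply ContinuousOn.div
    · fun_prop
    · fun_prop
    · intro t ht
      have htpos : 0 < t := lt_of_lt_of_le ht₀pos ht.1
      positivity
  -- IVT
  have hmem : μ ∈ Set.Icc (scalC n 1 / (2 * N ^ 2 - 1)) (scalC n t₀ / (2 * N ^ 2 - 1)) := by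
    constructor
    · rw [div_le_iff₀ hc]; nlinarith
    · rw [le_div_iff₀ hc]; nlinarith
  obtain ⟨t, htmem, hteq⟩ := intermediate_value_Icc' ht₀lt.le hcont hmem
  simp only at hteq
  have htIoo : t ∈ Set.Ioo (0 : ℝ) 1 := by
    refine ⟨lt_of_lt_of_le ht₀pos htmem.1, ?_⟩
    rcases lt_or_eq_of_le htmem.2 with h | h
    · exact h
    · exfalso
      rw [h] at hteq
      rw [div_eq_iff hc.ne'] at hteq
      nlinarith
  have heqn : scalC n t / (2 * (n:ℝ) ^ 2 - 1) = μ := hteq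
  have hteq' : scalC n t = (2 * N ^ 2 - 1) * μ := by
    rw [div_eq_iff hc.ne'] at hteq
    linarith
  refine ⟨t, ⟨htIoo, heqn⟩, ?_⟩
  rintro s ⟨hsIoo, hseq⟩
  rw [div_eq_iff hc.ne'] at hseq
  have hst : scalC n s = scalC n t := by rw [hteq']; linarith
  by_contra hne
  rcases lt_or_gt_of_ne hne with h | h
  · have := scalC_anti n hn hsIoo.1 h
    linarith
  · have := scalC_anti n hn htIoo.1 h
    linarith
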